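/- For α > -1, s > 0, and n ≥ 1, the integral b_n^{(α)}(s,x) := ∫₀ˣ y^α e^{-sy} L_n^{(α)}(y) dy satisfies b_n^{(α)}(s,x) = (1/n) e^{-sx} x^{α+1} L_{n-1}^{(α+1)}(x) + ((s−1)/n) b_{n-1}^{(α+1)}(s,x), with b_0^{(α)}(s,x) = s^{-(α+1)} γ(α+1, sx). -/

import Mathlib

open MeasureTheory intervalIntegral

noncomputable def laguerre (α : ℝ) (n : ℕ) (x : ℝ) : ℝ :=
  ∑ k ∈ Finset.range (n + 1),
    (-1 : ℝ) ^ k * Real.Gamma (α + n + 1) /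
      (Real.Gamma (α + k + 1) * (Nat.factorial (n - k)) * (Nat.factorial k)) * x ^ k

/-- `b_n^{(α)}(s, x) = ∫₀ˣ y^α e^{-s y} L_n^{(α)}(y) dy`. -/
noncomputable def laguerreB (α : ℝ) (n : ℕ) (s x : ℝ) : ℝ :=
  ∫ y in (0 : ℝ)..x, y ^ α * Real.exp (-(s * y)) * laguerre α n y

/-- The lower incomplete gamma function `γ(a, z) = ∫₀ᶻ e^{-t} t^{a-1} dt`. -/
noncomputable def lowerGamma (a z : ℝ) : ℝ :=
  ∫ t in (0 : ℝ)..z, Real.exp (-t) * t ^ (a - 1)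

/-!
Differentiating `e^{-sy} y^{α+1} L_m^{(α+1)}(y)` gives
`(m + 1) y^α e^{-sy} L_{m+1}^{(α)}(y) - (s - 1) y^{α+1} e^{-sy} L_m^{(α+1)}(y)`; on the explicit
coefficients this is the recurrence `Γ(z + 1) = z Γ(z)` combined with `(m + 1) - (j + 1) = m - j`.
Integrating over `[0, x]`, where the boundary term at `0` vanishes because `α + 1 > 0`, yields the
recursion. The case `n = 0` is the substitution `t = s y` in `γ(α + 1, s x)`.
-/

noncomputable def laguerreCoeff (α : ℝ) (n k : ℕ) : ℝ :=
  (-1 : ℝ) ^ k * Real.Gamma (α + n + 1) /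
    (Real.Gamma (α + k + 1) * (Nat.factorial (n - k)) * (Nat.factorial k))

theorem laguerre_eq_sum (α : ℝ) (n : ℕ) (y : ℝ) :
    laguerre α n y = ∑ k ∈ Finset.range (n + 1), laguerreCoeff α n k * y ^ k := rfl

theorem laguerre_zero {α : ℝ} (hα : -1 < α) (y : ℝ) : laguerre α 0 y = 1 := by
  have : Real.Gamma (α + 1) ≠ 0 := (Real.Gamma_pos_of_pos (by linarith)).ne'
  simp [laguerre, this]

@[fun_prop]
theorem continuous_laguerre (α : ℝ) (n : ℕ) : Continuous (laguerre α n) :=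
  continuous_finsetSum _ fun k _ => continuous_const.mul (continuous_pow k)

section ParameterShift

variable {α : ℝ} (hα : -1 < α) (m : ℕ)
include hα

theorem laguerreCoeff_add_one_zero :
    laguerreCoeff (α + 1) m 0 * (α + 1) = (m + 1) * laguerreCoeff α (m + 1) 0 := by
  have hα1 : α + 1 ≠ 0 := by linarith
  have hΓ : Real.Gamma (α + 1) ≠ 0 := (Real.Gamma_pos_of_pos (by linarith)).ne'
  simp only [laguerreCoeff, Nat.sub_zero, Nat.factorial_succ, Nat.factorial_zero, pow_zero,
    Nat.cast_zero, Nat.cast_mul, Nat.cast_succ, add_zero, Real.Gamma_add_one hα1]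
  have hf : (m.factorial : ℝ) ≠ 0 := by positivity
  rw [show α + 1 + m + 1 = α + (m + 1) + 1 by ring]
  field_simp

theorem laguerreCoeff_add_one_succ {j : ℕ} (hj : j < m) :
    laguerreCoeff (α + 1) m (j + 1) * (α + j + 2) =
      (m + 1) * laguerreCoeff α (m + 1) (j + 1) + laguerreCoeff (α + 1) m j := by
  obtain ⟨r, rfl⟩ : ∃ r, m = j + 1 + r := ⟨m - j - 1, by omega⟩
  have hαj : 0 < α + j + 2 := by linarith [(Nat.cast_nonneg j : (0 : ℝ) ≤ j)]
  have hΓ : Real.Gamma (α + j + 2) ≠ 0 := (Real.Gamma_pos_of_pos hαj).ne'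
  have hΓ' : Real.Gamma (α + j + 2 + 1) = (α + j + 2) * Real.Gamma (α + j + 2) :=
    Real.Gamma_add_one hαj.ne'
  simp only [laguerreCoeff, show j + 1 + r - (j + 1) = r by omega,
    show j + 1 + r + 1 - (j + 1) = r + 1 by omega, show j + 1 + r - j = r + 1 by omega,
    Nat.factorial_succ, pow_succ, Nat.cast_mul, Nat.cast_succ, Nat.cast_add]
  rw [show α + 1 + (j + 1 : ℝ) + 1 = α + j + 2 + 1 by ring, hΓ',
    show α + (j + 1 : ℝ) + 1 = α + j + 2 by ring,
    show α + 1 + (j : ℝ) + 1 = α + j + 2 by ring,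
    show α + (j + 1 + r + 1 : ℝ) + 1 = α + 1 + (j + 1 + r) + 1 by ring]
  have hrf : (r.factorial : ℝ) ≠ 0 := by positivity
  have hjf : (j.factorial : ℝ) ≠ 0 := by positivity
  field_simp
  ring

theorem laguerreCoeff_top :
    (m + 1) * laguerreCoeff α (m + 1) (m + 1) + laguerreCoeff (α + 1) m m = 0 := by
  have hΓ : Real.Gamma (α + m + 2) ≠ 0 :=
    (Real.Gamma_pos_of_pos (by linarith [(Nat.cast_nonneg m : (0 : ℝ) ≤ m)])).ne'
  simp only [laguerreCoeff, Nat.sub_self, Nat.factorial_succ, Nat.factorial_zero, pow_succ,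
    Nat.cast_mul, Nat.cast_succ]
  rw [show α + 1 + m + 1 = α + m + 2 by ring, show α + (m + 1) + 1 = α + m + 2 by ring]
  have hf : (m.factorial : ℝ) ≠ 0 := by positivity
  field_simp
  ring

/-- Coefficientwise form of `(α + 1) L + y L' = (m + 1) L_{m+1}^{(α)} + y L` for
`L = L_m^{(α+1)}`. -/
theorem sum_laguerreCoeff_mul_pow (y : ℝ) :
    ∑ k ∈ Finset.range (m + 1), laguerreCoeff (α + 1) m k * (α + k + 1) * y ^ k =
      (m + 1) * laguerre α (m + 1) y + y * laguerre (α + 1) m y := by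
  rw [laguerre_eq_sum, laguerre_eq_sum, Finset.mul_sum, Finset.mul_sum,
    Finset.sum_range_succ', Finset.sum_range_succ', Finset.sum_range_succ,
    Finset.sum_range_succ _ m]
  have hmid : ∀ i ∈ Finset.range m,
      laguerreCoeff (α + 1) m (i + 1) * (α + ↑(i + 1) + 1) * y ^ (i + 1) =
        (m + 1) * (laguerreCoeff α (m + 1) (i + 1) * y ^ (i + 1)) +
          y * (laguerreCoeff (α + 1) m i * y ^ i) := by
    intro i hi
    rw [Nat.cast_succ, show α + (i + 1 : ℝ) + 1 = α + i + 2 by ring,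
      laguerreCoeff_add_one_succ hα m (Finset.mem_range.mp hi)]
    ring
  rw [Finset.sum_congr rfl hmid, Finset.sum_add_distrib]
  linear_combination laguerreCoeff_add_one_zero hα m - y ^ (m + 1) * laguerreCoeff_top hα m

theorem hasDerivAt_rpow_mul_laguerre {y : ℝ} (hy : 0 < y) :
    HasDerivAt (fun t => t ^ (α + 1) * laguerre (α + 1) m t)
      (y ^ α * ((m + 1) * laguerre α (m + 1) y + y * laguerre (α + 1) m y)) y := by
  have hsum : HasDerivAt
      (fun t => ∑ k ∈ Finset.range (m + 1), laguerreCoeff (α + 1) m k * t ^ (α + 1 + k))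
      (∑ k ∈ Finset.range (m + 1),
        laguerreCoeff (α + 1) m k * ((α + 1 + k) * y ^ (α + 1 + k - 1))) y :=
    HasDerivAt.fun_sum fun k _ =>
      (Real.hasDerivAt_rpow_const (Or.inl hy.ne')).const_mul _
  have heq : (fun t => t ^ (α + 1) * laguerre (α + 1) m t) =ᶠ[nhds y]
      fun t => ∑ k ∈ Finset.range (m + 1), laguerreCoeff (α + 1) m k * t ^ (α + 1 + k) := by
    filter_upwards [Ioi_mem_nhds hy] with t ht
    rw [laguerre_eq_sum, Finset.mul_sum]
    refine Finset.sum_congr rfl fun k _ => ?_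
    rw [Real.rpow_add ht (α + 1), Real.rpow_natCast]
    ring
  refine (hsum.congr_of_eventuallyEq heq).congr_deriv ?_
  rw [← sum_laguerreCoeff_mul_pow hα, Finset.mul_sum]
  refine Finset.sum_congr rfl fun k _ => ?_
  rw [show α + 1 + k - 1 = α + k by ring, Real.rpow_add hy, Real.rpow_natCast]
  ring

theorem hasDerivAt_exp_mul_rpow_mul_laguerre (s : ℝ) {y : ℝ} (hy : 0 < y) :
    HasDerivAt (fun t => Real.exp (-(s * t)) * (t ^ (α + 1) * laguerre (α + 1) m t))
      ((m + 1) * (y ^ α * Real.exp (-(s * y)) * laguerre α (m + 1) y) -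
        (s - 1) * (y ^ (α + 1) * Real.exp (-(s * y)) * laguerre (α + 1) m y)) y := by
  have hexp : HasDerivAt (fun t => Real.exp (-(s * t))) (Real.exp (-(s * y)) * -s) y := by
    simpa using ((hasDerivAt_id y).const_mul s).neg.exp
  refine (hexp.mul (hasDerivAt_rpow_mul_laguerre hα m hy)).congr_deriv ?_
  rw [Real.rpow_add_one hy.ne']
  ring

end ParameterShift

theorem intervalIntegrable_rpow_mul_exp_mul_laguerre {β : ℝ} (hβ : -1 < β)
    (s γ : ℝ) (n : ℕ) (a b : ℝ) :
    IntervalIntegrable (fun y => y ^ β * Real.exp (-(s * y)) * laguerre γ n y) volume a b := by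
  have hcont : Continuous fun y => Real.exp (-(s * y)) * laguerre γ n y := by fun_prop
  simpa only [mul_assoc] using (intervalIntegrable_rpow' hβ).mul_continuousOn hcont.continuousOn

theorem laguerreB_zero {α : ℝ} (hα : -1 < α) {s : ℝ} (hs : 0 < s) {x : ℝ} (hx : 0 ≤ x) :
    laguerreB α 0 s x = s ^ (-(α + 1)) * lowerGamma (α + 1) (s * x) := by
  have hsubst : lowerGamma (α + 1) (s * x) =
      s * ∫ y in (0 : ℝ)..x, Real.exp (-(s * y)) * (s * y) ^ α := by
    have h := smul_integral_comp_mul_left (a := 0) (b := x) (fun t => Real.exp (-t) * t ^ α) s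
    rw [mul_zero, smul_eq_mul] at h
    rw [lowerGamma, add_sub_cancel_right, ← h]
  have hscale : (∫ y in (0 : ℝ)..x, Real.exp (-(s * y)) * (s * y) ^ α) =
      s ^ α * laguerreB α 0 s x := by
    rw [laguerreB, ← intervalIntegral.integral_const_mul]
    refine integral_congr fun y hy => ?_
    rw [Set.uIcc_of_le hx] at hy
    rw [laguerre_zero hα, Real.mul_rpow hs.le hy.1]
    ring
  rw [hsubst, hscale, ← mul_assoc, ← mul_assoc, ← Real.rpow_add_one hs.ne',
    ← Real.rpow_add hs, show -(α + 1) + 1 + α = (0 : ℝ) by ring, Real.rpow_zero, one_mul]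

theorem add_one_mul_laguerreB_succ {α : ℝ} (hα : -1 < α) (s : ℝ) {x : ℝ} (hx : 0 ≤ x)
    (m : ℕ) :
    (m + 1) * laguerreB α (m + 1) s x =
      Real.exp (-(s * x)) * x ^ (α + 1) * laguerre (α + 1) m x +
        (s - 1) * laguerreB (α + 1) m s x := by
  have hα0 : 0 < α + 1 := by linarith
  have hα1 : -1 < α + 1 := by linarith
  have hcont :
      Continuous fun t => Real.exp (-(s * t)) * (t ^ (α + 1) * laguerre (α + 1) m t) := by
    have := Real.continuous_rpow_const (q := α + 1) hα0.le
    fun_prop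
  have hI₁ := (intervalIntegrable_rpow_mul_exp_mul_laguerre hα s α (m + 1) 0 x).const_mul
    ((m : ℝ) + 1)
  have hI₂ := (intervalIntegrable_rpow_mul_exp_mul_laguerre hα1 s (α + 1) m 0 x).const_mul
    (s - 1)
  have hftc := integral_eq_sub_of_hasDerivAt_of_le hx hcont.continuousOn
    (fun y hy => hasDerivAt_exp_mul_rpow_mul_laguerre hα m s hy.1) (hI₁.sub hI₂)
  rw [integral_sub hI₁ hI₂, intervalIntegral.integral_const_mul,
    intervalIntegral.integral_const_mul, Real.zero_rpow hα0.ne',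
    zero_mul, mul_zero, sub_zero] at hftc
  rw [laguerreB, laguerreB]
  linear_combination hftc

theorem laguerreB_recursion (α : ℝ) (hα : -1 < α) (s : ℝ) (hs : 0 < s)
    (x : ℝ) (hx : 0 < x) :
    laguerreB α 0 s x = s ^ (-(α + 1)) * lowerGamma (α + 1) (s * x) ∧
      ∀ n : ℕ, 1 ≤ n →
        laguerreB α n s x =
          (1 / (n : ℝ)) * Real.exp (-(s * x)) * x ^ (α + 1) * laguerre (α + 1) (n - 1) x +
            ((s - 1) / (n : ℝ)) * laguerreB (α + 1) (n - 1) s x := by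
  refine ⟨laguerreB_zero hα hs hx.le, fun n hn => ?_⟩
  obtain ⟨m, rfl⟩ := Nat.exists_eq_add_of_le' hn
  have hm : ((m + 1 : ℕ) : ℝ) ≠ 0 := by positivity
  rw [Nat.add_sub_cancel]
  field_simp
  push_cast
  linear_combination add_one_mul_laguerreB_succ hα s hx.le m
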